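/- arXiv:2311.07691 — 2 statements merged into one kernel-verified Lean document; each statement's English description precedes it below -/
import Mathlib

section
/- (Representation Formula) Let Ω⊆𝕆 be an axially symmetric slice domain and let f be slice monogenic on Ω. Then for all real u,v with u+Iv∈Ω and for every pair of imaginary units I,J∈𝕊: f(u+Iv) = ½[f(u+vJ) + f(u−vJ)] + ½ I[J(f(u−vJ) − f(u+vJ))]. -/
noncomputable section

open MeasureTheory

/-- The octonions `𝕆`, modelled as ℝ⁸ with the Euclidean norm. -/
abbrev Oct : Type := EuclideanSpace ℝ (Fin 8)

namespace Oct

/-- Index table of the octonionic multiplication: `e i * e j = ± e (idxT i j)`. -/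
def idxT : Fin 8 → Fin 8 → Fin 8 :=
  ![![0,1,2,3,4,5,6,7],
    ![1,0,4,5,2,3,7,6],
    ![2,4,0,6,1,7,3,5],
    ![3,5,6,0,7,1,2,4],
    ![4,2,1,7,0,6,5,3],
    ![5,3,7,1,6,0,4,2],
    ![6,7,3,2,5,4,0,1],
    ![7,6,5,4,3,2,1,0]]

/-- Sign table of the octonionic multiplication: `e i * e j = signT i j • e (idxT i j)`. -/
def signT : Fin 8 → Fin 8 → ℝ :=
  ![![1,1,1,1,1,1,1,1],
    ![1,-1,1,1,-1,-1,-1,1],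
    ![1,-1,-1,1,1,1,-1,-1],
    ![1,-1,-1,-1,-1,1,1,1],
    ![1,1,-1,1,-1,-1,1,-1],
    ![1,1,-1,-1,1,-1,-1,1],
    ![1,1,1,-1,-1,1,-1,-1],
    ![1,-1,1,-1,1,-1,1,-1]]

/-- Octonionic multiplication. -/
def omul (x y : Oct) : Oct :=
  (WithLp.equiv 2 (Fin 8 → ℝ)).symm fun k =>
    ∑ i : Fin 8, ∑ j : Fin 8,
      if idxT i j = k then signT i j * x i * y j else 0

/-- Octonionic conjugation `x̄`. -/
def oconj (x : Oct) : Oct :=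
  (WithLp.equiv 2 (Fin 8 → ℝ)).symm fun k => if k = 0 then x k else -x k

/-- Real part of an octonion. -/
def oRe (x : Oct) : ℝ := x 0

/-- The basis octonions `e i`. -/
def unit (i : Fin 8) : Oct := EuclideanSpace.single i 1

/-- The octonion `1`. -/
def oone : Oct := unit 0

/-- Powers of an octonion (powers are unambiguous by power-associativity). -/
def opow (x : Oct) : ℕ → Oct
  | 0 => oone
  | n + 1 => omul (opow x n) x

/-- Inverse of a nonzero octonion. -/
def oinv (x : Oct) : Oct := (‖x‖ ^ 2)⁻¹ • oconj x

/-- A function is left octonionic monogenic on `U` if `𝒟 f = 0` there, where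
`𝒟 = ∂/∂x₀ + Σᵢ eᵢ ∂/∂xᵢ` is the octonionic Cauchy–Riemann operator. -/
def LeftMonogenicOn (f : Oct → Oct) (U : Set Oct) : Prop :=
  ∀ x ∈ U, DifferentiableAt ℝ f x ∧
    ∑ i : Fin 8, omul (unit i) (fderiv ℝ f x (unit i)) = 0

/-- The sphere `𝕊` of imaginary units of `𝕆`. -/
def sphS : Set Oct := {x | oRe x = 0 ∧ ‖x‖ = 1}

/-- The complex slice `ℂ_I = ℝ + ℝ I`. -/
def sliceC (I : Oct) : Set Oct := {x | ∃ u v : ℝ, x = u • oone + v • I}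

/-- A function is (left) slice monogenic on `Ω` if its restriction to every slice `ℂ_I`
is holomorphic, i.e. `(∂/∂u + I ∂/∂v) f(u + Iv) = 0`. -/
def SliceMonogenicOn (f : Oct → Oct) (Ω : Set Oct) : Prop :=
  ∀ I ∈ sphS, ∀ u v : ℝ, u • oone + v • I ∈ Ω →
    DifferentiableAt ℝ (fun p : ℝ × ℝ => f (p.1 • oone + p.2 • I)) (u, v) ∧
    fderiv ℝ (fun p : ℝ × ℝ => f (p.1 • oone + p.2 • I)) (u, v) (1, 0)
      + omul I (fderiv ℝ (fun p : ℝ × ℝ => f (p.1 • oone + p.2 • I)) (u, v) (0, 1)) = 0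

end Oct

/-!
Fix `I, J ∈ 𝕊`. Left multiplication by an imaginary unit squares to `-1`, and this is the only
octonionic identity the argument needs (no associativity). It makes the right-hand side of the
formula, as a function of `(u, v)`, satisfy the Cauchy–Riemann equation `∂ᵥ = I ∂ᵤ` of the slice
`ℂ_I`, because the restriction of `f` to `ℂ_J` satisfies that of `ℂ_J`. The difference with
`f(u + vI)` then satisfies it too and vanishes on the real axis. Composed with the chart
`y ↦ (yₖ - i (I y)ₖ)ₖ` it becomes a holomorphic `ℂ⁸`-valued function on the connected open set
`{u + iv | u + vI ∈ Ω}`, so the identity theorem makes it vanish everywhere.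
-/

namespace Oct

open Filter Topology

def lmul (a : Oct) : Oct →L[ℝ] Oct :=
  LinearMap.toContinuousLinearMap
    { toFun := omul a
      map_add' := fun x y => by
        ext k
        simp only [omul, PiLp.add_apply, WithLp.equiv_symm_apply, ← Finset.sum_add_distrib]
        refine Finset.sum_congr rfl fun i _ => Finset.sum_congr rfl fun j _ => ?_
        split_ifs <;> ring
      map_smul' := fun r x => by
        ext k
        simp only [omul, PiLp.smul_apply, WithLp.equiv_symm_apply, smul_eq_mul, Finset.mul_sum,
          RingHom.id_apply]
        refine Finset.sum_congr rfl fun i _ => Finset.sum_congr rfl fun j _ => ?_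
        split_ifs <;> ring }

@[simp] lemma lmul_apply (a x : Oct) : lmul a x = omul a x := rfl

lemma omul_zero (a : Oct) : omul a 0 = 0 := (lmul a).map_zero
lemma omul_add (a x y : Oct) : omul a (x + y) = omul a x + omul a y := (lmul a).map_add x y
lemma omul_sub (a x y : Oct) : omul a (x - y) = omul a x - omul a y := (lmul a).map_sub x y
lemma omul_neg (a x : Oct) : omul a (-x) = -omul a x := (lmul a).map_neg x
lemma omul_smul (a : Oct) (r : ℝ) (x : Oct) : omul a (r • x) = r • omul a x :=
  (lmul a).map_smul r x

lemma omul_omul_self_of_oRe_eq_zero {I : Oct} (hI : oRe I = 0) (x : Oct) :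
    omul I (omul I x) = -(‖I‖ ^ 2) • x := by
  have h0 : I 0 = 0 := hI
  rw [EuclideanSpace.norm_sq_eq]
  ext k
  fin_cases k <;>
  · simp [omul, Fin.sum_univ_eight, idxT, signT, h0, Real.norm_eq_abs, sq_abs]
    ring

lemma omul_omul_of_mem_sphS {I : Oct} (hI : I ∈ sphS) (x : Oct) : omul I (omul I x) = -x := by
  simp [omul_omul_self_of_oRe_eq_zero hI.1, hI.2]

lemma neg_mem_sphS {I : Oct} (hI : I ∈ sphS) : -I ∈ sphS :=
  ⟨by simpa [oRe] using hI.1, by rw [norm_neg]; exact hI.2⟩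

/-- `g` satisfies the Cauchy–Riemann equation `∂ᵥ g = I ∂ᵤ g` of the slice `ℂ_I` at `p`. -/
def IsSliceHolomorphicAt (I : Oct) (g : ℝ × ℝ → Oct) (p : ℝ × ℝ) : Prop :=
  ∃ D : ℝ × ℝ →L[ℝ] Oct, HasFDerivAt g D p ∧ D (0, 1) = omul I (D (1, 0))

lemma IsSliceHolomorphicAt.sub {I : Oct} {g h : ℝ × ℝ → Oct} {p : ℝ × ℝ}
    (hg : IsSliceHolomorphicAt I g p) (hh : IsSliceHolomorphicAt I h p) :
    IsSliceHolomorphicAt I (g - h) p := by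
  obtain ⟨D, hD, hDI⟩ := hg
  obtain ⟨E, hE, hEI⟩ := hh
  exact ⟨D - E, hD.sub hE, by simp [hDI, hEI, omul_sub]⟩

lemma SliceMonogenicOn.isSliceHolomorphicAt {f : Oct → Oct} {Ω : Set Oct}
    (hf : SliceMonogenicOn f Ω) {I : Oct} (hI : I ∈ sphS) {u v : ℝ}
    (huv : u • oone + v • I ∈ Ω) :
    IsSliceHolomorphicAt I (fun p => f (p.1 • oone + p.2 • I)) (u, v) := by
  obtain ⟨hd, hCR⟩ := hf I hI u v huv
  refine ⟨_, hd.hasFDerivAt, ?_⟩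
  have := congrArg (omul I) hCR
  rw [omul_add, omul_omul_of_mem_sphS hI, omul_zero, add_neg_eq_zero] at this
  exact this.symm

/-- For `F` the restriction of `f` to `ℂ_J`, this is the right-hand side of the representation
formula. -/
def rotateSlice (I J : Oct) (F : ℝ × ℝ → Oct) (p : ℝ × ℝ) : Oct :=
  (1 / 2 : ℝ) • (F p + F (p.1, -p.2)) + (1 / 2 : ℝ) • omul I (omul J (F (p.1, -p.2) - F p))

lemma rotateSlice_apply_zero (I J : Oct) (F : ℝ × ℝ → Oct) (u : ℝ) :
    rotateSlice I J F (u, 0) = F (u, 0) := by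
  simp only [rotateSlice, neg_zero, sub_self, omul_zero]
  module

lemma isSliceHolomorphicAt_rotateSlice {I J : Oct} (hI : I ∈ sphS) (hJ : J ∈ sphS)
    {F : ℝ × ℝ → Oct} {u v : ℝ} (hpos : IsSliceHolomorphicAt J F (u, v))
    (hneg : IsSliceHolomorphicAt J F (u, -v)) :
    IsSliceHolomorphicAt I (rotateSlice I J F) (u, v) := by
  obtain ⟨D, hD, hDJ⟩ := hpos
  obtain ⟨E, hE, hEJ⟩ := hneg
  let N : ℝ × ℝ →L[ℝ] ℝ × ℝ :=
    (ContinuousLinearMap.fst ℝ ℝ ℝ).prod (-ContinuousLinearMap.snd ℝ ℝ ℝ)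
  have hE' : HasFDerivAt (fun p : ℝ × ℝ => F (p.1, -p.2)) (E.comp N) (u, v) :=
    hE.comp (u, v) N.hasFDerivAt
  have hΨ : HasFDerivAt (rotateSlice I J F) ((1 / 2 : ℝ) • (D + E.comp N)
      + (1 / 2 : ℝ) • ((lmul I).comp (lmul J)).comp (E.comp N - D)) (u, v) :=
    ((hD.add hE').const_smul (1 / 2 : ℝ)).add
      ((((lmul I).comp (lmul J)).hasFDerivAt.comp _ (hE'.sub hD)).const_smul (1 / 2 : ℝ))
  refine ⟨_, hΨ, ?_⟩
  have hN₁ : N (1, 0) = (1, 0) := by simp [N]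
  have hN₂ : N (0, 1) = -(0, 1) := by simp [N]
  simp only [add_apply, smul_apply, sub_apply, ContinuousLinearMap.comp_apply, lmul_apply,
    hN₁, hN₂, map_neg, hDJ, hEJ, omul_add, omul_sub, omul_neg, omul_smul,
    omul_omul_of_mem_sphS hI, omul_omul_of_mem_sphS hJ]
  module

def sliceChart (I : Oct) : Oct →L[ℝ] (Fin 8 → ℂ) :=
  ContinuousLinearMap.pi fun k =>
    Complex.ofRealCLM.comp (EuclideanSpace.proj k)
      - Complex.I • Complex.ofRealCLM.comp ((EuclideanSpace.proj k).comp (lmul I))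

lemma sliceChart_apply (I y : Oct) (k : Fin 8) :
    sliceChart I y k = (y k : ℂ) - Complex.I * (omul I y k : ℂ) := by
  simp [sliceChart]

lemma sliceChart_omul {I : Oct} (hI : I ∈ sphS) (y : Oct) :
    sliceChart I (omul I y) = Complex.I • sliceChart I y := by
  ext k
  simp only [sliceChart_apply, omul_omul_of_mem_sphS hI, PiLp.neg_apply, Complex.ofReal_neg,
    Pi.smul_apply, smul_eq_mul]
  linear_combination (omul I y k : ℂ) * Complex.I_sq

lemma sliceChart_injective (I : Oct) : Function.Injective (sliceChart I) := by
  refine (injective_iff_map_eq_zero _).2 fun y hy => ?_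
  ext k
  simpa [sliceChart_apply] using congrArg Complex.re (congrFun hy k)

lemma IsSliceHolomorphicAt.differentiableAt_sliceChart {I : Oct} (hI : I ∈ sphS)
    {g : ℝ × ℝ → Oct} {z : ℂ} (hg : IsSliceHolomorphicAt I g (z.re, z.im)) :
    DifferentiableAt ℂ (fun w : ℂ => sliceChart I (g (w.re, w.im))) z := by
  obtain ⟨D, hD, hDI⟩ := hg
  have h := (sliceChart I).hasFDerivAt.comp z
    (hD.comp z Complex.equivRealProdCLM.toContinuousLinearMap.hasFDerivAt)
  refine (h.complexOfReal_hasFDerivAt ?_).differentiableAt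
  simp [hDI, sliceChart_omul hI]

lemma eq_zero_of_isSliceHolomorphicAt {I : Oct} (hI : I ∈ sphS) {g : ℝ × ℝ → Oct}
    {U : Set ℂ} (hUo : IsOpen U) (hUc : IsPreconnected U) {r : ℝ} (hr : (r : ℂ) ∈ U)
    (hg : ∀ z ∈ U, IsSliceHolomorphicAt I g (z.re, z.im)) (hreal : ∀ u : ℝ, g (u, 0) = 0)
    {z : ℂ} (hz : z ∈ U) : g (z.re, z.im) = 0 := by
  have hana : AnalyticOnNhd ℂ (fun w : ℂ => sliceChart I (g (w.re, w.im))) U :=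
    DifferentiableOn.analyticOnNhd
      (fun w hw => ((hg w hw).differentiableAt_sliceChart hI).differentiableWithinAt) hUo
  have hfreq : ∃ᶠ w in 𝓝[≠] (r : ℂ), sliceChart I (g (w.re, w.im)) = 0 := by
    have hreal_line : Tendsto ((↑) : ℝ → ℂ) (𝓝[≠] r) (𝓝[≠] (r : ℂ)) :=
      Complex.continuous_ofReal.continuousWithinAt.tendsto_nhdsWithin fun _ h => by simpa using h
    exact hreal_line.frequently (Frequently.of_forall fun u => by simp [hreal])
  apply sliceChart_injective I
  rw [map_zero]
  exact hana.eqOn_zero_of_preconnected_of_frequently_eq_zero hUc hr hfreq hz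

lemma isPreconnected_slicePreimage {I : Oct} (hI : I ∈ sphS) {Ω : Set Oct}
    (h : IsPreconnected (Ω ∩ sliceC I)) :
    IsPreconnected {z : ℂ | z.re • oone + z.im • I ∈ Ω} := by
  let π : Oct → ℂ := fun x => (inner ℝ oone x : ℂ) + (inner ℝ I x : ℂ) * Complex.I
  have hπ : ∀ u v : ℝ, π (u • oone + v • I) = u + v * Complex.I := by
    intro u v
    have hone : ‖oone‖ = 1 := by simp [oone, unit]
    have horth : inner ℝ oone I = (0 : ℝ) := by
      rw [oone, unit, EuclideanSpace.inner_single_left]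
      simpa [oRe] using hI.1
    simp [π, inner_add_right, inner_smul_right, hone, horth, hI.2, real_inner_comm oone I]
  have himage : {z : ℂ | z.re • oone + z.im • I ∈ Ω} = π '' (Ω ∩ sliceC I) := by
    ext z
    constructor
    · intro hz
      exact ⟨_, ⟨hz, z.re, z.im, rfl⟩, by rw [hπ, Complex.re_add_im]⟩
    · rintro ⟨_, ⟨hx, u, v, rfl⟩, rfl⟩
      simpa [hπ] using hx
  rw [himage]
  exact h.image π (by fun_prop)

end Oct

theorem representation_formula_general
    (Ω : Set Oct) (hopen : IsOpen Ω)
    (hreal : (Ω ∩ {x : Oct | ∃ r : ℝ, x = r • Oct.oone}).Nonempty)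
    (hslice : ∀ I ∈ Oct.sphS, IsConnected (Ω ∩ Oct.sliceC I))
    (haxsym : ∀ u v : ℝ, ∀ I ∈ Oct.sphS, ∀ J ∈ Oct.sphS,
      u • Oct.oone + v • I ∈ Ω → u • Oct.oone + v • J ∈ Ω)
    (f : Oct → Oct) (hf : Oct.SliceMonogenicOn f Ω) :
    ∀ I ∈ Oct.sphS, ∀ J ∈ Oct.sphS, ∀ u v : ℝ, u • Oct.oone + v • I ∈ Ω →
      f (u • Oct.oone + v • I)
        = (1 / 2 : ℝ) • (f (u • Oct.oone + v • J) + f (u • Oct.oone - v • J))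
          + (1 / 2 : ℝ) • Oct.omul I
              (Oct.omul J (f (u • Oct.oone - v • J) - f (u • Oct.oone + v • J))) := by
  intro I hI J hJ u v huv
  obtain ⟨-, hr, r, rfl⟩ := hreal
  let F : ℝ × ℝ → Oct := fun p => f (p.1 • Oct.oone + p.2 • J)
  have hdefect : ∀ z : ℂ, z.re • Oct.oone + z.im • I ∈ Ω →
      Oct.IsSliceHolomorphicAt I
        ((fun p => f (p.1 • Oct.oone + p.2 • I)) - Oct.rotateSlice I J F) (z.re, z.im) := by
    intro z hz
    have hzJ : z.re • Oct.oone + (-z.im) • J ∈ Ω :=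
      haxsym _ _ (-I) (Oct.neg_mem_sphS hI) J hJ (by rwa [smul_neg, neg_smul, neg_neg])
    exact (hf.isSliceHolomorphicAt hI hz).sub (Oct.isSliceHolomorphicAt_rotateSlice hI hJ
      (hf.isSliceHolomorphicAt hJ (haxsym _ _ I hI J hJ hz)) (hf.isSliceHolomorphicAt hJ hzJ))
  have key : f (u • Oct.oone + v • I) - Oct.rotateSlice I J F (u, v) = 0 := by
    simpa using Oct.eq_zero_of_isSliceHolomorphicAt hI (hopen.preimage (by fun_prop))
      (Oct.isPreconnected_slicePreimage hI (hslice I hI).isPreconnected) (r := r)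
      (by simpa using hr) hdefect (fun u => by simp [Oct.rotateSlice_apply_zero, F])
      (z := u + v * Complex.I) (by simpa using huv)
  rw [sub_eq_zero.mp key]
  simp only [Oct.rotateSlice, F, neg_smul, ← sub_eq_add_neg]

/-- **Representation Formula.** Let `Ω ⊆ 𝕆` be an axially symmetric slice
domain and `f` slice monogenic on `Ω`. Then for all real `u,v` with `u + Iv ∈ Ω` and all
imaginary units `I, J ∈ 𝕊`:
`f(u+Iv) = ½[f(u+vJ) + f(u-vJ)] + ½ I[J(f(u-vJ) - f(u+vJ))]`. -/
theorem representation_formula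
    (Ω : Set Oct) (hopen : IsOpen Ω) (hconn : IsConnected Ω)
    (hreal : (Ω ∩ {x : Oct | ∃ r : ℝ, x = r • Oct.oone}).Nonempty)
    (hslice : ∀ I ∈ Oct.sphS, IsConnected (Ω ∩ Oct.sliceC I))
    (haxsym : ∀ u v : ℝ, ∀ I ∈ Oct.sphS, ∀ J ∈ Oct.sphS,
      u • Oct.oone + v • I ∈ Ω → u • Oct.oone + v • J ∈ Ω)
    (f : Oct → Oct) (hf : Oct.SliceMonogenicOn f Ω) :
    ∀ I ∈ Oct.sphS, ∀ J ∈ Oct.sphS, ∀ u v : ℝ, u • Oct.oone + v • I ∈ Ω →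
      f (u • Oct.oone + v • I)
        = (1 / 2 : ℝ) • (f (u • Oct.oone + v • J) + f (u • Oct.oone - v • J))
          + (1 / 2 : ℝ) • Oct.omul I
              (Oct.omul J (f (u • Oct.oone - v • J) - f (u • Oct.oone + v • J))) :=
  representation_formula_general Ω hopen hreal hslice haxsym f hf
end
end

section
/- The sequential Hardy space (𝐇²(B₈(0,1),𝕆), [·,·]) is an octonionic Hilbert space; in particular, for f(x)=Σ_{n≥0}xⁿaₙ and g(x)=Σ_{n≥0}xⁿbₙ in 𝐇²(B₈(0,1),𝕆) and α∈𝕆: conj([g,f]) = [f,g]; [fα,f] = Σ_{n≥0} conj(aₙ)(aₙα) = (Σ_{n≥0} conj(aₙ)aₙ)·α = [f,f]·α; and Re([fα,g]) = Re(Σ_{n≥0} conj(bₙ)(aₙα)) = Re([f,g]·α). -/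
/-! Every property is a termwise identity in `𝕆`: conjugation reverses products,
`x̄(xα) = |x|²α` by alternativity, and `Re(x(yz)) = Re((xy)z)`. These pass to the series because
conjugation, right multiplication and `Re` are continuous and `ℝ`-linear, and because
`|b̄ₙaₙ| = |bₙ||aₙ| ≤ (|aₙ|² + |bₙ|²)/2` makes the series absolutely convergent. -/

noncomputable section

open MeasureTheory

namespace Oct

/-- The sequential octonion-valued inner product `[f,g] = Σₙ conj(bₙ)aₙ` of the Hardy
space of the unit ball, on Taylor coefficient sequences (`a` for `f`, `b` for `g`). -/
def seqInner (a b : ℕ → Oct) : Oct := ∑' n : ℕ, omul (oconj (b n)) (a n)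

end Oct

theorem summable_mul_of_summable_sq {ι : Type*} {u v : ι → ℝ}
    (hu : Summable fun i => u i ^ 2) (hv : Summable fun i => v i ^ 2) :
    Summable fun i => u i * v i := by
  refine Summable.of_norm_bounded ((hu.add hv).div_const 2) fun i => ?_
  rw [Real.norm_eq_abs, abs_mul]
  nlinarith [sq_nonneg (|u i| - |v i|), sq_abs (u i), sq_abs (v i)]

namespace Oct

theorem omul_apply (x y : Oct) (k : Fin 8) :
    omul x y k = ∑ i : Fin 8, ∑ j : Fin 8,
      if idxT i j = k then signT i j * x i * y j else 0 := rfl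

theorem oconj_apply (x : Oct) (k : Fin 8) :
    oconj x k = if k = 0 then x k else -x k := rfl

theorem oone_apply (k : Fin 8) : oone k = if k = 0 then 1 else 0 := by
  simp [oone, unit]

theorem omul_add_left (x y z : Oct) : omul (x + y) z = omul x z + omul y z := by
  ext k
  simp only [omul_apply, PiLp.add_apply, ← Finset.sum_add_distrib]
  refine Finset.sum_congr rfl fun i _ => Finset.sum_congr rfl fun j _ => ?_
  split_ifs <;> ring

theorem omul_add_right (x y z : Oct) : omul x (y + z) = omul x y + omul x z := by
  ext k
  simp only [omul_apply, PiLp.add_apply, ← Finset.sum_add_distrib]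
  refine Finset.sum_congr rfl fun i _ => Finset.sum_congr rfl fun j _ => ?_
  split_ifs <;> ring

theorem omul_smul_left (r : ℝ) (x y : Oct) : omul (r • x) y = r • omul x y := by
  ext k
  simp only [omul_apply, PiLp.smul_apply, smul_eq_mul, Finset.mul_sum]
  refine Finset.sum_congr rfl fun i _ => Finset.sum_congr rfl fun j _ => ?_
  split_ifs <;> ring

theorem omul_smul_right (r : ℝ) (x y : Oct) : omul x (r • y) = r • omul x y := by
  ext k
  simp only [omul_apply, PiLp.smul_apply, smul_eq_mul, Finset.mul_sum]
  refine Finset.sum_congr rfl fun i _ => Finset.sum_congr rfl fun j _ => ?_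
  split_ifs <;> ring

def omulₗ : Oct →ₗ[ℝ] Oct →ₗ[ℝ] Oct :=
  LinearMap.mk₂ ℝ omul omul_add_left omul_smul_left omul_add_right omul_smul_right

theorem oconj_oconj (x : Oct) : oconj (oconj x) = x := by
  ext k
  simp only [oconj_apply]
  split_ifs <;> simp

def oconjEquiv : Oct ≃ₗ[ℝ] Oct :=
  LinearEquiv.ofInvolutive
    { toFun := oconj
      map_add' := fun x y => by ext k; simp only [oconj_apply, PiLp.add_apply]; split_ifs <;> ring
      map_smul' := fun r x => by ext k; simp only [oconj_apply, PiLp.smul_apply]; split_ifs <;> simp }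
    oconj_oconj

theorem omul_oone_left (x : Oct) : omul oone x = x := by
  ext k
  fin_cases k <;> simp [omul_apply, oone_apply, Fin.sum_univ_eight, idxT, signT]

theorem oconj_omul (x y : Oct) : oconj (omul x y) = omul (oconj y) (oconj x) := by
  ext k
  fin_cases k <;> simp [omul_apply, oconj_apply, Fin.sum_univ_eight, idxT, signT] <;> ring

theorem oconj_omul_self (x : Oct) : omul (oconj x) x = ‖x‖ ^ 2 • oone := by
  ext k
  rw [EuclideanSpace.real_norm_sq_eq]
  fin_cases k <;>
    simp [omul_apply, oconj_apply, oone_apply, Fin.sum_univ_eight, idxT, signT] <;> ring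

theorem oconj_omul_omul_self (x y : Oct) : omul (oconj x) (omul x y) = ‖x‖ ^ 2 • y := by
  ext k
  rw [EuclideanSpace.real_norm_sq_eq]
  fin_cases k <;> simp [omul_apply, oconj_apply, Fin.sum_univ_eight, idxT, signT] <;> ring

theorem oRe_omul_assoc (x y z : Oct) : oRe (omul x (omul y z)) = oRe (omul (omul x y) z) := by
  simp [oRe, omul_apply, Fin.sum_univ_eight, idxT, signT]
  ring

theorem norm_oconj (x : Oct) : ‖oconj x‖ = ‖x‖ := by
  simp only [EuclideanSpace.norm_eq, oconj_apply]
  congr 1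
  refine Finset.sum_congr rfl fun i _ => ?_
  split_ifs <;> simp

theorem norm_omul (x y : Oct) : ‖omul x y‖ = ‖x‖ * ‖y‖ := by
  refine (sq_eq_sq₀ (norm_nonneg _) (by positivity)).1 ?_
  simp only [mul_pow, EuclideanSpace.real_norm_sq_eq]
  simp [omul_apply, Fin.sum_univ_eight, idxT, signT]
  ring

theorem summable_omul {ι : Type*} {a b : ι → Oct} (ha : Summable fun n => ‖a n‖ ^ 2)
    (hb : Summable fun n => ‖b n‖ ^ 2) : Summable fun n => omul (a n) (b n) :=
  Summable.of_norm (by simpa only [norm_omul] using summable_mul_of_summable_sq ha hb)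

section SeqInner

variable {a b : ℕ → Oct}

theorem seqInner_self (ha : Summable fun n => ‖a n‖ ^ 2) :
    seqInner a a = (∑' n, ‖a n‖ ^ 2) • oone := by
  simp only [seqInner, oconj_omul_self, ha.tsum_smul_const]

theorem oconj_seqInner : oconj (seqInner b a) = seqInner a b := by
  change oconjEquiv.toContinuousLinearEquiv (∑' n, _) = _
  rw [ContinuousLinearEquiv.map_tsum]
  exact tsum_congr fun n => by
    change oconj (omul (oconj (a n)) (b n)) = _
    rw [oconj_omul, oconj_oconj]

theorem seqInner_omul_right_self (ha : Summable fun n => ‖a n‖ ^ 2) (α : Oct) :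
    seqInner (fun n => omul (a n) α) a = omul (seqInner a a) α := by
  simp only [seqInner, oconj_omul_omul_self, ha.tsum_smul_const, oconj_omul_self,
    omul_smul_left, omul_oone_left]

theorem oRe_seqInner_omul_right (ha : Summable fun n => ‖a n‖ ^ 2)
    (hb : Summable fun n => ‖b n‖ ^ 2) (α : Oct) :
    oRe (seqInner (fun n => omul (a n) α) b) = oRe (omul (seqInner a b) α) := by
  have hb' : Summable fun n => ‖oconj (b n)‖ ^ 2 := by simpa only [norm_oconj] using hb
  have haα : Summable fun n => ‖omul (a n) α‖ ^ 2 := by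
    simpa only [norm_omul, mul_pow] using ha.mul_right (‖α‖ ^ 2)
  have hL : HasSum (fun n => oRe (omul (oconj (b n)) (omul (a n) α)))
      (oRe (seqInner (fun n => omul (a n) α) b)) :=
    (summable_omul hb' haα).hasSum.mapL (EuclideanSpace.proj 0)
  have hR : HasSum (fun n => oRe (omul (omul (oconj (b n)) (a n)) α))
      (oRe (omul (seqInner a b) α)) :=
    (summable_omul hb' ha).hasSum.mapL
      ((EuclideanSpace.proj 0).comp (LinearMap.toContinuousLinearMap (omulₗ.flip α)))
  simp only [← oRe_omul_assoc] at hR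
  exact hL.unique hR

end SeqInner

end Oct

theorem sequential_Hardy_space_is_octonionic_Hilbert_general
    (a b : ℕ → Oct) (ha : Summable fun n => ‖a n‖ ^ 2) (hb : Summable fun n => ‖b n‖ ^ 2) :
    Oct.seqInner a a = (∑' n : ℕ, ‖a n‖ ^ 2) • Oct.oone ∧
    Oct.oconj (Oct.seqInner b a) = Oct.seqInner a b ∧
    (∀ α : Oct,
      Oct.seqInner (fun n => Oct.omul (a n) α) a
          = ∑' n : ℕ, Oct.omul (Oct.oconj (a n)) (Oct.omul (a n) α) ∧
      (∑' n : ℕ, Oct.omul (Oct.oconj (a n)) (Oct.omul (a n) α))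
          = Oct.omul (∑' n : ℕ, Oct.omul (Oct.oconj (a n)) (a n)) α ∧
      Oct.seqInner (fun n => Oct.omul (a n) α) a = Oct.omul (Oct.seqInner a a) α) ∧
    (∀ α : Oct,
      Oct.oRe (Oct.seqInner (fun n => Oct.omul (a n) α) b)
          = Oct.oRe (∑' n : ℕ, Oct.omul (Oct.oconj (b n)) (Oct.omul (a n) α)) ∧
      Oct.oRe (Oct.seqInner (fun n => Oct.omul (a n) α) b)
          = Oct.oRe (Oct.omul (Oct.seqInner a b) α)) :=
  ⟨Oct.seqInner_self ha, Oct.oconj_seqInner,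
    fun α => ⟨rfl, Oct.seqInner_omul_right_self ha α, Oct.seqInner_omul_right_self ha α⟩,
    fun α => ⟨rfl, Oct.oRe_seqInner_omul_right ha hb α⟩⟩

/-- The sequential Hardy space `(𝐇²(B₈(0,1),𝕆), [·,·])` is an
octonionic Hilbert space; in particular, for `f(x) = Σ xⁿaₙ`, `g(x) = Σ xⁿbₙ` in
`𝐇²(B₈(0,1),𝕆)` and `α ∈ 𝕆`: `[f,f] = Σ|aₙ|²`, `conj([g,f]) = [f,g]`,
`[fα,f] = Σ conj(aₙ)(aₙα) = (Σ conj(aₙ)aₙ)·α = [f,f]·α`, and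
`Re([fα,g]) = Re(Σ conj(bₙ)(aₙα)) = Re([f,g]·α)`. -/
theorem sequential_Hardy_space_is_octonionic_Hilbert
    (a b : ℕ → Oct) (ha : Summable fun n => ‖a n‖ ^ 2) (hb : Summable fun n => ‖b n‖ ^ 2)
    (f g : Oct → Oct)
    (hf : ∀ x ∈ Metric.ball (0 : Oct) 1, HasSum (fun n : ℕ => Oct.omul (Oct.opow x n) (a n)) (f x))
    (hg : ∀ x ∈ Metric.ball (0 : Oct) 1, HasSum (fun n : ℕ => Oct.omul (Oct.opow x n) (b n)) (g x)) :
    Oct.seqInner a a = (∑' n : ℕ, ‖a n‖ ^ 2) • Oct.oone ∧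
    Oct.oconj (Oct.seqInner b a) = Oct.seqInner a b ∧
    (∀ α : Oct,
      Oct.seqInner (fun n => Oct.omul (a n) α) a
          = ∑' n : ℕ, Oct.omul (Oct.oconj (a n)) (Oct.omul (a n) α) ∧
      (∑' n : ℕ, Oct.omul (Oct.oconj (a n)) (Oct.omul (a n) α))
          = Oct.omul (∑' n : ℕ, Oct.omul (Oct.oconj (a n)) (a n)) α ∧
      Oct.seqInner (fun n => Oct.omul (a n) α) a = Oct.omul (Oct.seqInner a a) α) ∧
    (∀ α : Oct,
      Oct.oRe (Oct.seqInner (fun n => Oct.omul (a n) α) b)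
          = Oct.oRe (∑' n : ℕ, Oct.omul (Oct.oconj (b n)) (Oct.omul (a n) α)) ∧
      Oct.oRe (Oct.seqInner (fun n => Oct.omul (a n) α) b)
          = Oct.oRe (Oct.omul (Oct.seqInner a b) α)) :=
  sequential_Hardy_space_is_octonionic_Hilbert_general a b ha hb
end
end
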